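/- Let H be defined on T = {(a,b) : 0 ≤ a < b ≤ 1}. Then there exists f : [0,1] → ℝ with DQ_f = H on T if and only if for all 0 ≤ a < b < c ≤ 1, the determinant of the 3×3 matrix with rows (H(b,c), H(a,c), H(a,b)), (a, b, c), (1, 1, 1) is zero. -/
import Mathlib


theorem stmt_4 (H : ℝ → ℝ → ℝ) :
    (∃ f : ℝ → ℝ, ∀ a b : ℝ, 0 ≤ a → a < b → b ≤ 1 →
        (f b - f a) / (b - a) = H a b) ↔
    (∀ a b c : ℝ, 0 ≤ a → a < b → b < c → c ≤ 1 →
      Matrix.det !![H b c, H a c, H a b; a, b, c; 1, 1, 1] = 0) := by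
  constructor
  · rintro ⟨f, hf⟩ a b c ha hab hbc hc
    have h1 := hf a b ha hab (le_of_lt (lt_of_lt_of_le hbc hc))
    have h2 := hf b c (le_of_lt (lt_of_le_of_lt ha hab)) hbc hc
    have h3 := hf a c ha (hab.trans hbc) hc
    have hab' : b - a ≠ 0 := sub_ne_zero.2 hab.ne'
    have hbc' : c - b ≠ 0 := sub_ne_zero.2 hbc.ne'
    have hac' : c - a ≠ 0 := sub_ne_zero.2 (hab.trans hbc).ne'
    simp [Matrix.det_fin_three]
    rw [← h1, ← h2, ← h3]
    field_simp
    ring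
  · intro h
    refine ⟨fun x => x * H 0 x, fun a b ha hab hb => ?_⟩
    show (b * H 0 b - a * H 0 a) / (b - a) = H a b
    rcases eq_or_lt_of_le ha with rfl | ha'
    · rw [div_eq_iff (sub_ne_zero.2 hab.ne')]
      ring
    · have := h 0 a b le_rfl ha' hab hb
      simp [Matrix.det_fin_three] at this
      rw [div_eq_iff (sub_ne_zero.2 hab.ne')]
      nlinarith [this]
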